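/- Let d ≥ 1, let g ≥ 0 and μ ≥ 0, and let h be a smooth, strictly positive solution on [0,T] of the lubrication equation ∂_t h − div(g h ∇h − μ h ∇Δh) = 0 on 𝕋^d. Then for every t ∈ [0,T], (d/dt) ∫_{𝕋^d} |∇h(t,x)|^2 dx ≤ 0. -/

import Mathlib

open MeasureTheory Real

/-- Partial derivative `∂ᵢ f` of a function on `ℝᵈ` (as `EuclideanSpace`). -/
noncomputable def pder {d : ℕ} (i : Fin d) (f : EuclideanSpace ℝ (Fin d) → ℝ)
    (x : EuclideanSpace ℝ (Fin d)) : ℝ :=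
  fderiv ℝ f x (EuclideanSpace.single i 1)

/-- The Laplacian `Δ f = ∑ᵢ ∂ᵢ∂ᵢ f`. -/
noncomputable def lap {d : ℕ} (f : EuclideanSpace ℝ (Fin d) → ℝ)
    (x : EuclideanSpace ℝ (Fin d)) : ℝ :=
  ∑ i, pder i (pder i f) x

/-- Squared norm of the gradient, `|∇f|² = ∑ᵢ (∂ᵢ f)²`. -/
noncomputable def gradSq {d : ℕ} (f : EuclideanSpace ℝ (Fin d) → ℝ)
    (x : EuclideanSpace ℝ (Fin d)) : ℝ :=
  ∑ i, (pder i f x) ^ 2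

/-- Squared Frobenius norm of the Hessian, `|∇∇f|² = ∑ᵢⱼ (∂ᵢ∂ⱼ f)²`. -/
noncomputable def hessSq {d : ℕ} (f : EuclideanSpace ℝ (Fin d) → ℝ)
    (x : EuclideanSpace ℝ (Fin d)) : ℝ :=
  ∑ i, ∑ j, (pder i (pder j f) x) ^ 2

/-- The fundamental domain `[0,1)^d` of the torus `𝕋^d`. -/
def fundDom (d : ℕ) : Set (EuclideanSpace ℝ (Fin d)) :=
  {x | ∀ i, 0 ≤ x i ∧ x i < 1}

/-- `ℤ^d`-periodicity of a function on `ℝ^d`. -/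
def ZPeriodic {d : ℕ} (f : EuclideanSpace ℝ (Fin d) → ℝ) : Prop :=
  ∀ (x : EuclideanSpace ℝ (Fin d)) (k : Fin d → ℤ),
    f (x + (WithLp.equiv 2 (Fin d → ℝ)).symm (fun i => (k i : ℝ))) = f x

/-!
Differentiating under the integral sign and integrating by parts twice on the torus gives, with
the flux `F = g h ∇h - μ h ∇Δh`,

  `d/dt ∫ |∇h|² = 2 ∫ ∇h · ∇(div F) = 2 ∫ F · ∇Δh = 2g ∫ h ∇h·∇Δh - 2μ ∫ h |∇Δh|²`.

The last term is `≤ 0`. For the first, three more integrations by parts (against `Δh`, `|∇h|²`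
and `h`) give the identity `3 ∫ h ∇h·∇Δh = -∫ h (Δh)² - 2 ∫ h |∇²h|²`, which is `≤ 0` since
`h ≥ 0`. Every integration by parts reduces to `∫_{[0,1)^d} ∂ᵢf = 0` for periodic `f`, an instance
of the divergence theorem on the unit cube.
-/

open scoped ContDiff

theorem fderiv_fderiv_apply {E F : Type*} [NormedAddCommGroup E] [NormedSpace ℝ E]
    [NormedAddCommGroup F] [NormedSpace ℝ F] {f : E → F} {x : E}
    (hf : DifferentiableAt ℝ (fderiv ℝ f) x) (u w : E) :
    fderiv ℝ (fun y => fderiv ℝ f y w) x u = fderiv ℝ (fderiv ℝ f) x u w := by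
  simp [fderiv_clm_apply hf (differentiableAt_const w)]

section PartialDerivatives

variable {d : ℕ} {f a b : EuclideanSpace ℝ (Fin d) → ℝ} {x : EuclideanSpace ℝ (Fin d)}

theorem pder_mul (ha : DifferentiableAt ℝ a x) (hb : DifferentiableAt ℝ b x) (i : Fin d) :
    pder i (fun y => a y * b y) x = pder i a x * b x + a x * pder i b x := by
  simp [pder, fderiv_fun_mul ha hb]
  ring

theorem pder_sum {ι : Type*} (s : Finset ι) {F : ι → EuclideanSpace ℝ (Fin d) → ℝ}
    (hF : ∀ j ∈ s, DifferentiableAt ℝ (F j) x) (i : Fin d) :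
    pder i (fun y => ∑ j ∈ s, F j y) x = ∑ j ∈ s, pder i (F j) x := by
  simp [pder, fderiv_fun_sum hF]

theorem contDiff_pder {n : WithTop ℕ∞} (hf : ContDiff ℝ (n + 1) f) (i : Fin d) :
    ContDiff ℝ n (pder i f) :=
  (hf.fderiv_right le_rfl).clm_apply contDiff_const

theorem pder_comm (hf : ContDiff ℝ 2 f) (i j : Fin d) :
    pder i (pder j f) x = pder j (pder i f) x := by
  have hdf : DifferentiableAt ℝ (fderiv ℝ f) x :=
    (hf.fderiv_right (m := 1) (by norm_num)).differentiable one_ne_zero x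
  change fderiv ℝ (fun y => fderiv ℝ f y _) x _ = fderiv ℝ (fun y => fderiv ℝ f y _) x _
  rw [fderiv_fderiv_apply hdf, fderiv_fderiv_apply hdf]
  exact hf.contDiffAt.isSymmSndFDerivAt (by simp) _ _

theorem sum_pder_pder_pder_eq_pder_lap (hf : ContDiff ℝ 3 f) (j : Fin d) :
    ∑ i, pder i (pder i (pder j f)) x = pder j (lap f) x := by
  have hf2 : ContDiff ℝ 2 f := hf.of_le (by norm_num)
  have hfi : ∀ i, ContDiff ℝ 2 (pder i f) := fun i => contDiff_pder hf i
  have hswap : ∀ i, pder i (pder i (pder j f)) x = pder j (pder i (pder i f)) x := fun i => by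
    rw [show pder i (pder j f) = pder j (pder i f) from funext fun y => pder_comm hf2 i j,
      pder_comm (hfi i)]
  simp only [hswap]
  exact (pder_sum _ (fun i _ => ((contDiff_pder (n := 1) (hfi i) i).differentiable
    one_ne_zero).differentiableAt) j).symm

end PartialDerivatives

section FundamentalDomain

open Set

variable {d : ℕ}

theorem fundDom_eq_preimage :
    fundDom d = WithLp.ofLp ⁻¹' Set.pi univ (fun _ : Fin d => Ico (0 : ℝ) 1) := by
  ext x
  simp [fundDom]

theorem isBounded_fundDom : Bornology.IsBounded (fundDom d) := by
  refine ((isCompact_Icc (a := (0 : Fin d → ℝ)) (b := 1)).image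
    (PiLp.continuous_toLp 2 _)).isBounded.subset fun x hx => ?_
  exact ⟨WithLp.ofLp x, ⟨fun i => (hx i).1, fun i => (hx i).2.le⟩, rfl⟩

theorem Continuous.integrableOn_fundDom {f : EuclideanSpace ℝ (Fin d) → ℝ}
    (hf : Continuous f) : IntegrableOn f (fundDom d) :=
  (hf.continuousOn.integrableOn_compact isBounded_fundDom.isCompact_closure).mono_set
    subset_closure

theorem setIntegral_fundDom_eq_setIntegral_Icc (f : EuclideanSpace ℝ (Fin d) → ℝ) :
    ∫ x in fundDom d, f x = ∫ y in Icc (0 : Fin d → ℝ) 1, f (WithLp.toLp 2 y) := by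
  rw [fundDom_eq_preimage, volume_pi, ← setIntegral_congr_set Measure.univ_pi_Ico_ae_eq_Icc,
    ← volume_pi]
  exact (PiLp.volume_preserving_ofLp _).setIntegral_preimage_emb
    (MeasurableEquiv.toLp 2 _).symm.measurableEmbedding (fun y => f (WithLp.toLp 2 y)) _

/-- The divergence theorem for the field `F • eᵢ`: by periodicity its fluxes through the two faces
orthogonal to `eᵢ` cancel. -/
theorem integral_Icc_fderiv_apply_single_eq_zero {n : ℕ} {F : (Fin (n + 1) → ℝ) → ℝ}
    (hF : ContDiff ℝ 1 F) (i : Fin (n + 1)) (hper : ∀ y, F (y + Pi.single i 1) = F y) :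
    ∫ y in Icc (0 : Fin (n + 1) → ℝ) 1, fderiv ℝ F y (Pi.single i 1) = 0 := by
  classical
  have hdiff : Differentiable ℝ F := hF.differentiable one_ne_zero
  have hsum : ∀ y, ∑ j, (Pi.single i (fderiv ℝ F) : Fin (n + 1) → _) j y (Pi.single j 1) =
      fderiv ℝ F y (Pi.single i 1) := fun y => by
    rw [Fintype.sum_eq_single i fun j hj => by rw [Pi.single_eq_of_ne hj]; rfl]
    simp
  have hdiv := integral_divergence_of_hasFDerivAt_off_countable' 0 1 zero_le_one
    (Pi.single i F) (Pi.single i (fderiv ℝ F)) ∅ countable_empty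
    (fun j => by
      rcases eq_or_ne j i with rfl | hj
      · simpa using hF.continuous.continuousOn
      · rw [Pi.single_eq_of_ne hj]
        exact continuousOn_const)
    (fun y _ j => by
      rcases eq_or_ne j i with rfl | hj
      · simpa using (hdiff y).hasFDerivAt
      · rw [Pi.single_eq_of_ne hj, Pi.single_eq_of_ne hj]
        exact hasFDerivAt_const (0 : ℝ) y)
    (by
      simp only [hsum]
      exact ((hF.continuous_fderiv one_ne_zero).clm_apply continuous_const).continuousOn
        |>.integrableOn_compact isCompact_Icc)
  simp only [hsum] at hdiv
  rw [hdiv]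
  refine Finset.sum_eq_zero fun j _ => ?_
  rcases eq_or_ne j i with rfl | hj
  · have hface : ∀ y : Fin n → ℝ, (j.insertNth (1 : ℝ) y : Fin (n + 1) → ℝ) =
        j.insertNth 0 y + Pi.single j 1 := fun y => by
      rw [← sub_eq_iff_eq_add', Fin.insertNth_sub_same, sub_zero]
    simp only [Pi.single_eq_same, Pi.one_apply, Pi.zero_apply, hface, hper, sub_self]
  · simp [Pi.single_eq_of_ne hj]

theorem integral_pder_eq_zero {f : EuclideanSpace ℝ (Fin d) → ℝ} (hf : ContDiff ℝ 1 f)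
    (hper : ZPeriodic f) (i : Fin d) : ∫ x in fundDom d, pder i f x = 0 := by
  obtain ⟨n, rfl⟩ : ∃ n, d = n + 1 := Nat.exists_eq_add_one.mpr i.pos
  let e := (PiLp.continuousLinearEquiv 2 ℝ fun _ : Fin (n + 1) => ℝ).symm
  have hpder : ∀ y, pder i f (e y) = fderiv ℝ (f ∘ e) y (Pi.single i 1) := fun y => by
    rw [e.comp_right_fderiv]
    rfl
  rw [setIntegral_fundDom_eq_setIntegral_Icc]
  refine (integral_congr_ae (Filter.Eventually.of_forall hpder)).trans
    (integral_Icc_fderiv_apply_single_eq_zero (hf.comp e.contDiff) i fun y => ?_)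
  have hk : (fun j => ((Pi.single i 1 : Fin (n + 1) → ℤ) j : ℝ)) = Pi.single i 1 := by
    ext j
    rcases eq_or_ne j i with rfl | hj
    · simp
    · simp [Pi.single_eq_of_ne hj]
  simpa [e, hk] using hper (e y) (Pi.single i 1)

end FundamentalDomain

theorem ZPeriodic.pder {d : ℕ} {f : EuclideanSpace ℝ (Fin d) → ℝ} (hf : ZPeriodic f)
    (i : Fin d) : ZPeriodic (pder i f) := fun x k => by
  have htranslate :
      (fun y => f (y + (WithLp.equiv 2 (Fin d → ℝ)).symm fun i => (k i : ℝ))) = f :=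
    funext fun y => hf y k
  rw [_root_.pder, ← fderiv_comp_add_right, htranslate, _root_.pder]

/-- `f` is the lift to `ℝ^d` of an element of `C^∞(𝕋^d)`. -/
@[fun_prop]
def SmoothPeriodic {d : ℕ} (f : EuclideanSpace ℝ (Fin d) → ℝ) : Prop :=
  ContDiff ℝ ∞ f ∧ ZPeriodic f

namespace SmoothPeriodic

variable {d : ℕ} {f g : EuclideanSpace ℝ (Fin d) → ℝ}

theorem contDiff (hf : SmoothPeriodic f) {n : ℕ} : ContDiff ℝ n f :=
  hf.1.of_le (by exact_mod_cast le_top)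

theorem differentiable (hf : SmoothPeriodic f) : Differentiable ℝ f :=
  hf.contDiff.differentiable one_ne_zero

theorem integrableOn (hf : SmoothPeriodic f) : IntegrableOn f (fundDom d) :=
  hf.1.continuous.integrableOn_fundDom

@[fun_prop]
theorem const (c : ℝ) : SmoothPeriodic fun _ : EuclideanSpace ℝ (Fin d) => c :=
  ⟨contDiff_const, fun _ _ => rfl⟩

@[fun_prop]
theorem sub (hf : SmoothPeriodic f) (hg : SmoothPeriodic g) :
    SmoothPeriodic fun x => f x - g x :=
  ⟨hf.1.sub hg.1, fun x k => by simp only [hf.2 x k, hg.2 x k]⟩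

@[fun_prop]
theorem mul (hf : SmoothPeriodic f) (hg : SmoothPeriodic g) :
    SmoothPeriodic fun x => f x * g x :=
  ⟨hf.1.mul hg.1, fun x k => by simp only [hf.2 x k, hg.2 x k]⟩

@[fun_prop]
theorem pow (hf : SmoothPeriodic f) (n : ℕ) : SmoothPeriodic fun x => f x ^ n :=
  ⟨hf.1.pow n, fun x k => by simp only [hf.2 x k]⟩

@[fun_prop]
theorem sum {ι : Type*} (s : Finset ι) {F : ι → EuclideanSpace ℝ (Fin d) → ℝ}
    (hF : ∀ i ∈ s, SmoothPeriodic (F i)) : SmoothPeriodic fun x => ∑ i ∈ s, F i x :=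
  ⟨ContDiff.sum fun i hi => (hF i hi).1,
    fun x k => Finset.sum_congr rfl fun i hi => (hF i hi).2 x k⟩

@[fun_prop]
theorem pder (hf : SmoothPeriodic f) (i : Fin d) : SmoothPeriodic (_root_.pder i f) :=
  ⟨contDiff_pder hf.1 i, hf.2.pder i⟩

@[fun_prop]
theorem lap (hf : SmoothPeriodic f) : SmoothPeriodic (_root_.lap f) :=
  show SmoothPeriodic fun x => ∑ i, _root_.pder i (_root_.pder i f) x by fun_prop

@[fun_prop]
theorem gradSq (hf : SmoothPeriodic f) : SmoothPeriodic (_root_.gradSq f) :=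
  show SmoothPeriodic fun x => ∑ i, _root_.pder i f x ^ 2 by fun_prop

@[fun_prop]
theorem hessSq (hf : SmoothPeriodic f) : SmoothPeriodic (_root_.hessSq f) :=
  show SmoothPeriodic fun x => ∑ i, ∑ j, _root_.pder i (_root_.pder j f) x ^ 2 by fun_prop

end SmoothPeriodic

section IntegrationByParts

variable {d : ℕ} {a b : EuclideanSpace ℝ (Fin d) → ℝ}

theorem integral_mul_pder (ha : SmoothPeriodic a) (hb : SmoothPeriodic b) (i : Fin d) :
    ∫ x in fundDom d, a x * pder i b x = -∫ x in fundDom d, pder i a x * b x := by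
  have hab : SmoothPeriodic fun x => a x * b x := by fun_prop
  have hzero := integral_pder_eq_zero hab.contDiff hab.2 i
  have hprod : ∀ x, pder i (fun y => a y * b y) x = pder i a x * b x + a x * pder i b x :=
    fun x => pder_mul (ha.differentiable x) (hb.differentiable x) i
  rw [integral_congr_ae (ae_of_all _ hprod),
    integral_add (SmoothPeriodic.integrableOn (by fun_prop))
      (SmoothPeriodic.integrableOn (by fun_prop))] at hzero
  linarith

theorem integral_sum_mul_pder {F : Fin d → EuclideanSpace ℝ (Fin d) → ℝ}
    (hF : ∀ i, SmoothPeriodic (F i)) (hb : SmoothPeriodic b) :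
    ∫ x in fundDom d, ∑ i, F i x * pder i b x =
      -∫ x in fundDom d, (∑ i, pder i (F i) x) * b x := by
  simp_rw [Finset.sum_mul]
  rw [integral_finsetSum _ fun i _ => SmoothPeriodic.integrableOn (by fun_prop),
    integral_finsetSum _ fun i _ => SmoothPeriodic.integrableOn (by fun_prop),
    ← Finset.sum_neg_distrib]
  exact Finset.sum_congr rfl fun i _ => integral_mul_pder (hF i) hb i

end IntegrationByParts

section Identities

variable {d : ℕ} {v : EuclideanSpace ℝ (Fin d) → ℝ}

theorem integral_mul_grad_inner_grad_lap (hv : SmoothPeriodic v) :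
    ∫ x in fundDom d, v x * ∑ i, pder i v x * pder i (lap v) x =
      -(∫ x in fundDom d, gradSq v x * lap v x) - ∫ x in fundDom d, v x * lap v x ^ 2 := by
  have hdiv : ∀ x, ∑ i, pder i (fun y => v y * pder i v y) x = gradSq v x + v x * lap v x :=
    fun x => by
      simp only [pder_mul (hv.differentiable x) ((hv.pder _).differentiable x),
        Finset.sum_add_distrib, gradSq, lap, Finset.mul_sum, sq]
  calc ∫ x in fundDom d, v x * ∑ i, pder i v x * pder i (lap v) x
      = ∫ x in fundDom d, ∑ i, v x * pder i v x * pder i (lap v) x := by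
        simp only [Finset.mul_sum, mul_assoc]
    _ = -∫ x in fundDom d, (∑ i, pder i (fun y => v y * pder i v y) x) * lap v x :=
        integral_sum_mul_pder (fun i => by fun_prop) (by fun_prop)
    _ = -∫ x in fundDom d, (gradSq v x * lap v x + v x * lap v x ^ 2) := by
        congr 2 with x
        rw [hdiv]
        ring
    _ = _ := by
        rw [integral_add (SmoothPeriodic.integrableOn (by fun_prop))
          (SmoothPeriodic.integrableOn (by fun_prop))]
        ring

theorem two_mul_integral_hess_grad_grad (hv : SmoothPeriodic v) :
    2 * ∫ x in fundDom d, ∑ i, ∑ j, pder i v x * pder j v x * pder i (pder j v) x =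
      -∫ x in fundDom d, gradSq v x * lap v x := by
  have hgrad : ∀ i x, pder i (gradSq v) x = ∑ j, 2 * pder j v x * pder i (pder j v) x :=
    fun i x => by
      change pder i (fun y => ∑ j, pder j v y ^ 2) x = _
      simp only [sq]
      rw [pder_sum _ fun j _ => ((hv.pder j).mul (hv.pder j)).differentiable x]
      refine Finset.sum_congr rfl fun j _ => ?_
      rw [pder_mul ((hv.pder j).differentiable x) ((hv.pder j).differentiable x)]
      ring
  calc 2 * ∫ x in fundDom d, ∑ i, ∑ j, pder i v x * pder j v x * pder i (pder j v) x
      = ∫ x in fundDom d, ∑ i, pder i v x * pder i (gradSq v) x := by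
        rw [← integral_const_mul]
        congr 1 with x
        simp only [hgrad, Finset.mul_sum]
        exact Finset.sum_congr rfl fun i _ => Finset.sum_congr rfl fun j _ => by ring
    _ = -∫ x in fundDom d, (∑ i, pder i (pder i v) x) * gradSq v x :=
        integral_sum_mul_pder (fun i => hv.pder i) (by fun_prop)
    _ = -∫ x in fundDom d, gradSq v x * lap v x := by
        congr 2 with x
        exact mul_comm _ _

theorem integral_hess_grad_grad (hv : SmoothPeriodic v) :
    ∫ x in fundDom d, ∑ i, ∑ j, pder i v x * pder j v x * pder i (pder j v) x =
      -(∫ x in fundDom d, v x * hessSq v x) -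
        ∫ x in fundDom d, v x * ∑ i, pder i v x * pder i (lap v) x := by
  have hdiv : ∀ x, ∑ i, pder i (fun y => ∑ j, pder j v y * pder i (pder j v) y) x =
      hessSq v x + ∑ j, pder j v x * pder j (lap v) x := fun x => by
    have hterm : ∀ i, pder i (fun y => ∑ j, pder j v y * pder i (pder j v) y) x =
        ∑ j, (pder i (pder j v) x ^ 2 + pder j v x * pder i (pder i (pder j v)) x) := fun i => by
      rw [pder_sum _ fun j _ => ((hv.pder j).mul ((hv.pder j).pder i)).differentiable x]
      refine Finset.sum_congr rfl fun j _ => ?_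
      rw [pder_mul ((hv.pder j).differentiable x) (((hv.pder j).pder i).differentiable x), sq]
    simp only [hterm, Finset.sum_add_distrib, hessSq]
    rw [Finset.sum_comm (f := fun i j => pder j v x * pder i (pder i (pder j v)) x)]
    simp only [← Finset.mul_sum, sum_pder_pder_pder_eq_pder_lap hv.contDiff]
  calc ∫ x in fundDom d, ∑ i, ∑ j, pder i v x * pder j v x * pder i (pder j v) x
      = ∫ x in fundDom d, ∑ i, (∑ j, pder j v x * pder i (pder j v) x) * pder i v x := by
        congr 1 with x
        simp only [Finset.sum_mul]
        exact Finset.sum_congr rfl fun i _ => Finset.sum_congr rfl fun j _ => by ring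
    _ = -∫ x in fundDom d,
          (∑ i, pder i (fun y => ∑ j, pder j v y * pder i (pder j v) y) x) * v x :=
        integral_sum_mul_pder (fun i => by fun_prop) hv
    _ = -∫ x in fundDom d, (v x * hessSq v x + v x * ∑ i, pder i v x * pder i (lap v) x) := by
        congr 2 with x
        rw [hdiv]
        ring
    _ = _ := by
        rw [integral_add (SmoothPeriodic.integrableOn (by fun_prop))
          (SmoothPeriodic.integrableOn (by fun_prop))]
        ring

theorem three_mul_integral_mul_grad_inner_grad_lap (hv : SmoothPeriodic v) :
    3 * ∫ x in fundDom d, v x * ∑ i, pder i v x * pder i (lap v) x =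
      -(∫ x in fundDom d, v x * lap v x ^ 2) - 2 * ∫ x in fundDom d, v x * hessSq v x := by
  linarith [integral_mul_grad_inner_grad_lap hv, two_mul_integral_hess_grad_grad hv,
    integral_hess_grad_grad hv]

theorem integral_mul_grad_inner_grad_lap_nonpos (hv : SmoothPeriodic v) (hv0 : ∀ x, 0 ≤ v x) :
    ∫ x in fundDom d, v x * ∑ i, pder i v x * pder i (lap v) x ≤ 0 := by
  have hlap : 0 ≤ ∫ x in fundDom d, v x * lap v x ^ 2 :=
    integral_nonneg fun x => mul_nonneg (hv0 x) (sq_nonneg _)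
  have hhess : 0 ≤ ∫ x in fundDom d, v x * hessSq v x :=
    integral_nonneg fun x => mul_nonneg (hv0 x)
      (Finset.sum_nonneg fun i _ => Finset.sum_nonneg fun j _ => sq_nonneg _)
  linarith [three_mul_integral_mul_grad_inner_grad_lap hv]

theorem integral_grad_inner_grad_div {G : Fin d → EuclideanSpace ℝ (Fin d) → ℝ}
    (hv : SmoothPeriodic v) (hG : ∀ i, SmoothPeriodic (G i)) :
    ∫ x in fundDom d, ∑ j, pder j v x * pder j (fun y => ∑ i, pder i (G i) y) x =
      ∫ x in fundDom d, ∑ i, G i x * pder i (lap v) x := by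
  rw [integral_sum_mul_pder (fun j => hv.pder j) (by fun_prop), integral_sum_mul_pder hG hv.lap]
  congr 2 with x
  exact mul_comm _ _

theorem integral_grad_inner_grad_div_flux_nonpos (hv : SmoothPeriodic v) (hv0 : ∀ x, 0 ≤ v x)
    {g μ : ℝ} (hg : 0 ≤ g) (hμ : 0 ≤ μ) :
    ∫ x in fundDom d, ∑ j, pder j v x * pder j (fun y => ∑ i, pder i (fun z =>
      g * v z * pder i v z - μ * v z * pder i (lap v) z) y) x ≤ 0 := by
  have hflux : ∀ x,
      ∑ i, (g * v x * pder i v x - μ * v x * pder i (lap v) x) * pder i (lap v) x =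
        g * (v x * ∑ i, pder i v x * pder i (lap v) x) -
          μ * (v x * ∑ i, pder i (lap v) x ^ 2) := fun x => by
      simp only [Finset.mul_sum, ← Finset.sum_sub_distrib]
      exact Finset.sum_congr rfl fun i _ => by ring
  rw [integral_grad_inner_grad_div hv (fun i => by fun_prop),
    integral_congr_ae (ae_of_all _ hflux), integral_sub (SmoothPeriodic.integrableOn (by fun_prop))
      (SmoothPeriodic.integrableOn (by fun_prop)), integral_const_mul, integral_const_mul]
  have hC : 0 ≤ ∫ x in fundDom d, v x * ∑ i, pder i (lap v) x ^ 2 :=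
    integral_nonneg fun x => mul_nonneg (hv0 x) (Finset.sum_nonneg fun i _ => sq_nonneg _)
  linarith [mul_nonpos_of_nonneg_of_nonpos hg (integral_mul_grad_inner_grad_lap_nonpos hv hv0),
    mul_nonneg hμ hC]

end Identities

section DifferentiationUnderIntegral

variable {X : Type*} [MetricSpace X] [ProperSpace X] [MeasurableSpace X]
  [OpensMeasurableSpace X] {μ : Measure X} [IsFiniteMeasureOnCompacts μ]

theorem hasDerivAt_setIntegral_of_continuous {s : Set X} (hs : Bornology.IsBounded s)
    {H H' : ℝ × X → ℝ} (hH : Continuous H) (hH' : Continuous H')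
    (hderiv : ∀ τ x, HasDerivAt (fun σ => H (σ, x)) (H' (τ, x)) τ) (t : ℝ) :
    HasDerivAt (fun τ => ∫ x in s, H (τ, x) ∂μ) (∫ x in s, H' (t, x) ∂μ) t := by
  have hK : IsCompact (closure s) := hs.isCompact_closure
  obtain ⟨M, hM⟩ := ((isCompact_closedBall t 1).prod hK).exists_bound_of_continuousOn
    hH'.continuousOn
  have hbound : ∀ᵐ x ∂μ.restrict s, ∀ τ ∈ Metric.ball t 1, ‖H' (τ, x)‖ ≤ M := by
    filter_upwards [ae_mono (Measure.restrict_mono subset_closure le_rfl)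
      (ae_restrict_mem isClosed_closure.measurableSet)] with x hx τ hτ
    exact hM (τ, x) ⟨Metric.ball_subset_closedBall hτ, hx⟩
  exact (hasDerivAt_integral_of_dominated_loc_of_deriv_le (Metric.ball_mem_nhds t one_pos)
    (Filter.Eventually.of_forall fun τ =>
      (by fun_prop : Continuous fun x => H (τ, x)).aestronglyMeasurable)
    (((by fun_prop : Continuous fun x => H (t, x)).continuousOn.integrableOn_compact hK).mono_set
      subset_closure)
    (by fun_prop : Continuous fun x => H' (t, x)).aestronglyMeasurable hbound
    (integrableOn_const ((measure_mono subset_closure).trans_lt hK.measure_lt_top).ne)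
    (ae_of_all _ fun x τ _ => hderiv τ x)).2

end DifferentiationUnderIntegral

section Slices

variable {F : Type*} [NormedAddCommGroup F] [NormedSpace ℝ F] {f : ℝ × F → ℝ}

theorem fderiv_slice_apply {s : ℝ} {x : F} (hf : DifferentiableAt ℝ f (s, x)) (w : F) :
    fderiv ℝ (fun y => f (s, y)) x w = fderiv ℝ f (s, x) (0, w) := by
  have hslice : HasFDerivAt (fun y => f (s, y))
      ((fderiv ℝ f (s, x)).comp ((0 : F →L[ℝ] ℝ).prod (ContinuousLinearMap.id ℝ F))) x :=
    hf.hasFDerivAt.comp x ((hasFDerivAt_const s x).prodMk (hasFDerivAt_id x))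
  simp [hslice.fderiv]

theorem hasDerivAt_slice {t : ℝ} {x : F} (hf : DifferentiableAt ℝ f (t, x)) :
    HasDerivAt (fun τ => f (τ, x)) (fderiv ℝ f (t, x) (1, 0)) t :=
  hf.hasFDerivAt.comp_hasDerivAt t ((hasDerivAt_id t).prodMk (hasDerivAt_const t x))

theorem hasDerivAt_fderiv_slice_apply (hf : ContDiff ℝ 2 f) (t : ℝ) (x : F) (w : ℝ × F) :
    HasDerivAt (fun τ => fderiv ℝ f (τ, x) w)
      (fderiv ℝ (fderiv ℝ f) (t, x) (1, 0) w) t := by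
  have hDf : Differentiable ℝ (fderiv ℝ f) :=
    (hf.fderiv_right (m := 1) (by norm_num)).differentiable one_ne_zero
  rw [← fderiv_fderiv_apply (hDf _)]
  exact hasDerivAt_slice ((hDf _).clm_apply (differentiableAt_const w))

theorem fderiv_deriv_slice_apply (hf : ContDiff ℝ 2 f) (t : ℝ) (x w : F) :
    fderiv ℝ (fun y => deriv (fun τ => f (τ, y)) t) x w =
      fderiv ℝ (fderiv ℝ f) (t, x) (1, 0) (0, w) := by
  have hDf : Differentiable ℝ (fderiv ℝ f) :=
    (hf.fderiv_right (m := 1) (by norm_num)).differentiable one_ne_zero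
  simp only [fun y => (hasDerivAt_slice ((hf.differentiable (by norm_num)) (t, y))).deriv]
  rw [fderiv_slice_apply ((hDf _).clm_apply (differentiableAt_const _)),
    fderiv_fderiv_apply (hDf _)]
  exact hf.contDiffAt.isSymmSndFDerivAt (by simp) _ _

end Slices

theorem hasDerivAt_integral_gradSq_slice {d : ℕ} {h : ℝ × EuclideanSpace ℝ (Fin d) → ℝ}
    (hh : ContDiff ℝ 2 h) (t : ℝ) :
    HasDerivAt (fun s => ∫ x in fundDom d, gradSq (fun y => h (s, y)) x)
      (2 * ∫ x in fundDom d, ∑ i, pder i (fun y => h (t, y)) x *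
        pder i (fun y => deriv (fun s => h (s, y)) t) x) t := by
  let e : Fin d → ℝ × EuclideanSpace ℝ (Fin d) := fun i => (0, EuclideanSpace.single i 1)
  have hpder : ∀ s x i, pder i (fun y => h (s, y)) x = fderiv ℝ h (s, x) (e i) :=
    fun s x i => fderiv_slice_apply ((hh.differentiable (by norm_num)) _) _
  have hpder_dt : ∀ x i, pder i (fun y => deriv (fun s => h (s, y)) t) x =
      fderiv ℝ (fderiv ℝ h) (t, x) (1, 0) (e i) :=
    fun x i => fderiv_deriv_slice_apply hh t x _
  have hderiv : ∀ τ x, HasDerivAt (fun σ => ∑ i, fderiv ℝ h (σ, x) (e i) ^ 2)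
      (2 * ∑ i, fderiv ℝ h (τ, x) (e i) * fderiv ℝ (fderiv ℝ h) (τ, x) (1, 0) (e i)) τ :=
    fun τ x => by
      rw [Finset.mul_sum]
      refine HasDerivAt.fun_sum fun i _ => ?_
      refine ((hasDerivAt_fderiv_slice_apply hh τ x (e i)).fun_pow 2).congr_deriv ?_
      norm_num
      ring
  have hD : ContDiff ℝ 1 (fderiv ℝ h) := hh.fderiv_right (m := 1) (by norm_num)
  have hDc : Continuous (fderiv ℝ h) := hD.continuous
  have hD2c : Continuous (fderiv ℝ (fderiv ℝ h)) := hD.continuous_fderiv one_ne_zero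
  have key := hasDerivAt_setIntegral_of_continuous (μ := volume) isBounded_fundDom
    (H := fun p => ∑ i, fderiv ℝ h p (e i) ^ 2)
    (H' := fun p => 2 * ∑ i, fderiv ℝ h p (e i) * fderiv ℝ (fderiv ℝ h) p (1, 0) (e i))
    (by fun_prop) (by fun_prop) hderiv t
  simp only [gradSq, hpder, hpder_dt, integral_const_mul] at key ⊢
  exact key

theorem lubrication_gradL2_decay_general (d : ℕ) (g μ : ℝ) (hg : 0 ≤ g) (hμ : 0 ≤ μ)
    (T : ℝ) (h : ℝ × EuclideanSpace ℝ (Fin d) → ℝ)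
    (hsm : ContDiff ℝ (⊤ : ℕ∞) h)
    (hper : ∀ t, ZPeriodic (fun x => h (t, x)))
    (hpos : ∀ t x, 0 < h (t, x))
    (heq : ∀ t ∈ Set.Icc (0 : ℝ) T, ∀ x,
      deriv (fun s => h (s, x)) t
        - (∑ i, pder i (fun y =>
            g * h (t, y) * pder i (fun z => h (t, z)) y
            - μ * h (t, y) * pder i (lap (fun z => h (t, z))) y) x) = 0) :
    ∀ t ∈ Set.Icc (0 : ℝ) T,
      deriv (fun s => ∫ x in fundDom d, gradSq (fun y => h (s, y)) x) t ≤ 0 := by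
  intro t ht
  have hslice : SmoothPeriodic fun x => h (t, x) := ⟨by fun_prop, hper t⟩
  have hdt : (fun y => deriv (fun s => h (s, y)) t) = fun y => ∑ i, pder i (fun z =>
      g * h (t, z) * pder i (fun z => h (t, z)) z
      - μ * h (t, z) * pder i (lap (fun z => h (t, z))) z) y :=
    funext fun y => sub_eq_zero.mp (heq t ht y)
  rw [(hasDerivAt_integral_gradSq_slice (hsm.of_le (by norm_cast)) t).deriv, hdt]
  have hdiss := integral_grad_inner_grad_div_flux_nonpos hslice (fun x => (hpos t x).le) hg hμ
  linarith

/-- Decay of the `L²`-norm of the gradient for the lubrication equation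
`∂ₜh − div(g h ∇h − μ h ∇Δh) = 0` on `𝕋^d` (second half of Theorem `Theo2`). -/
theorem lubrication_gradL2_decay (d : ℕ) (hd : 1 ≤ d) (g μ : ℝ) (hg : 0 ≤ g) (hμ : 0 ≤ μ)
    (T : ℝ) (h : ℝ × EuclideanSpace ℝ (Fin d) → ℝ)
    (hsm : ContDiff ℝ (⊤ : ℕ∞) h)
    (hper : ∀ t, ZPeriodic (fun x => h (t, x)))
    (hpos : ∀ t x, 0 < h (t, x))
    (heq : ∀ t ∈ Set.Icc (0 : ℝ) T, ∀ x,
      deriv (fun s => h (s, x)) t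
        - (∑ i, pder i (fun y =>
            g * h (t, y) * pder i (fun z => h (t, z)) y
            - μ * h (t, y) * pder i (lap (fun z => h (t, z))) y) x) = 0) :
    ∀ t ∈ Set.Icc (0 : ℝ) T,
      deriv (fun s => ∫ x in fundDom d, gradSq (fun y => h (s, y)) x) t ≤ 0 :=
  lubrication_gradL2_decay_general d g μ hg hμ T h hsm hper hpos heq
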